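/- Let X and Y be real-valued random variables. Then law(X) ≽_lr law(Y) (the monotone likelihood ratio property with law(X) dominating) holds if and only if for every measurable weight function h with h(X) > 0 a.s., h(Y) > 0 a.s., 0 < E[h(X)] < ∞, and 0 < E[h(Y)] < ∞, the tilted distribution h⊙X first-order stochastically dominates the tilted distribution h⊙Y, i.e., E[1(X ≤ t)·h(X)]/E[h(X)] ≤ E[1(Y ≤ t)·h(Y)]/E[h(Y)] for all t ∈ ℝ. -/

import Mathlib

/-!
Let `f` and `g` be the densities of `μ = law X` and `ν = law Y` with respect to `μ + ν`. Since
`f + g = 1` almost everywhere, MLRP says that `f` is nondecreasing off a null set.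

If it is, then `f x * g y ≤ g x * f y` for `x ≤ y`; integrating this against `h x * h y` over
`{x ≤ t} × {y > t}` is the cross-multiplied form of the tilted dominance.

Conversely, tilting by `1_{A ∪ B} + ε` and letting `ε → 0` shows `μ A * ν B ≤ ν A * μ B`
whenever `A` lies to the left of `B`. For `A = {x ≤ s, f x > c'}` and `B = {x > s, f x < c}` with
`c < c'` this forces `A` or `B` to be null, and a union over rational `s, c, c'` is a null set
off which `f` is monotone.
-/

open MeasureTheory Set

/-- The monotone likelihood ratio property (MLRP) for two distributions `F0` and `F1`
on a linearly ordered measurable space, with `F0` dominating: the ratio of the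
Radon–Nikodym derivatives of `F0` and `F1` with respect to the sum measure `F0 + F1`
is non-decreasing `(F0 + F1)`-almost everywhere (with the convention, automatic in
`ℝ≥0∞`, that the ratio is `∞` where the density of `F1` vanishes but that of `F0`
does not). -/
def MLRP {α : Type*} [MeasurableSpace α] [LinearOrder α]
    (F0 F1 : Measure α) : Prop :=
  ∃ S : Set α, (F0 + F1) S = 0 ∧
    ∀ x, x ∉ S → ∀ y, y ∉ S → x ≤ y →
      F0.rnDeriv (F0 + F1) x / F1.rnDeriv (F0 + F1) x ≤
        F0.rnDeriv (F0 + F1) y / F1.rnDeriv (F0 + F1) y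

open scoped ENNReal

section General

variable {α : Type*} [MeasurableSpace α]

/-- `MLRP μ ν` is, by definition, `AEOrderedPairs (μ + ν)` of the comparison of density ratios. -/
def AEOrderedPairs [LinearOrder α] (μ : Measure α) (p : α → α → Prop) : Prop :=
  ∃ S : Set α, μ S = 0 ∧ ∀ x, x ∉ S → ∀ y, y ∉ S → x ≤ y → p x y

theorem AEOrderedPairs.mono_of_ae [LinearOrder α] {μ : Measure α} {p p' : α → α → Prop}
    {q : α → Prop} (hp : AEOrderedPairs μ p) (hq : ∀ᵐ x ∂μ, q x)
    (hpp' : ∀ x y, q x → q y → x ≤ y → p x y → p' x y) : AEOrderedPairs μ p' := by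
  obtain ⟨S, hS, hpS⟩ := hp
  refine ⟨S ∪ {x | ¬ q x}, measure_union_null hS (ae_iff.1 hq), fun x hx y hy hxy => ?_⟩
  simp only [mem_union, mem_ofPred_eq, not_or, not_not] at hx hy
  exact hpp' x y hx.2 hy.2 hxy (hpS x hx.1 y hy.1 hxy)

theorem exists_measure_eq_zero_forall_subset_or_subset {ι : Type*} [Countable ι]
    {μ : Measure α} {A B : ι → Set α} (h : ∀ i, μ (A i) = 0 ∨ μ (B i) = 0) :
    ∃ S, μ S = 0 ∧ ∀ i, A i ⊆ S ∨ B i ⊆ S := by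
  classical
  refine ⟨⋃ i, if μ (A i) = 0 then A i else B i, measure_iUnion_null fun i => ?_, fun i => ?_⟩
  · split_ifs with hA
    exacts [hA, (h i).resolve_left hA]
  · by_cases hA : μ (A i) = 0
    · exact .inl (subset_iUnion_of_subset i (by rw [if_pos hA]))
    · exact .inr (subset_iUnion_of_subset i (by rw [if_neg hA]))

theorem lintegral_mul_lintegral_le_of_ae_prod {μ₁ μ₂ : Measure α} [SFinite μ₂]
    {F G : α → ℝ≥0∞} (hF : Measurable F) (hG : Measurable G)
    (h : ∀ᵐ z ∂μ₁.prod μ₂, F z.1 * G z.2 ≤ G z.1 * F z.2) :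
    (∫⁻ x, F x ∂μ₁) * ∫⁻ y, G y ∂μ₂ ≤ (∫⁻ x, G x ∂μ₁) * ∫⁻ y, F y ∂μ₂ := by
  rw [← lintegral_prod_mul hF.aemeasurable hG.aemeasurable,
    ← lintegral_prod_mul hG.aemeasurable hF.aemeasurable]
  exact lintegral_mono_ae h

theorem ENNReal.mul_le_mul_of_div_le_div {a b c d : ℝ≥0∞} (hb : b ≠ ∞) (hc : c ≠ ∞) (hd : d ≠ ∞)
    (h : a / b ≤ c / d) : a * d ≤ b * c := by
  rcases eq_or_ne d 0 with rfl | hd0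
  · simp
  rcases eq_or_ne b 0 with rfl | hb0
  · rcases eq_or_ne a 0 with rfl | ha0
    · simp
    · rw [ENNReal.div_zero ha0, top_le_iff, ENNReal.div_eq_top] at h
      tauto
  calc a * d = a / b * (b * d) := by rw [← mul_assoc, ENNReal.div_mul_cancel hb0 hb]
    _ ≤ c / d * (b * d) := by gcongr
    _ = b * c := by rw [mul_comm b, ← mul_assoc, ENNReal.div_mul_cancel hd0 hd, mul_comm]

theorem mul_measure_le_of_le_rnDeriv {μ ν : Measure α} {s : Set α} {c : ℝ≥0∞}
    (hc : ∀ x ∈ s, c ≤ μ.rnDeriv ν x) : c * ν s ≤ μ s :=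
  calc c * ν s = ∫⁻ _ in s, c ∂ν := (setLIntegral_const s c).symm
    _ ≤ ∫⁻ x in s, μ.rnDeriv ν x ∂ν := setLIntegral_mono (Measure.measurable_rnDeriv μ ν) hc
    _ ≤ μ s := Measure.setLIntegral_rnDeriv_le s

theorem measure_le_mul_of_rnDeriv_le {μ ν : Measure α} [μ.HaveLebesgueDecomposition ν] [SFinite ν]
    (hμν : μ ≪ ν) {s : Set α} {c : ℝ≥0∞} (hc : ∀ x ∈ s, μ.rnDeriv ν x ≤ c) : μ s ≤ c * ν s :=
  calc μ s = ∫⁻ x in s, μ.rnDeriv ν x ∂ν := (Measure.setLIntegral_rnDeriv hμν s).symm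
    _ ≤ ∫⁻ _ in s, c ∂ν := setLIntegral_mono measurable_const hc
    _ = c * ν s := setLIntegral_const s c

theorem ae_rnDeriv_add_right_eq_one_sub (μ ν : Measure α) [IsFiniteMeasure μ] [IsFiniteMeasure ν] :
    ∀ᵐ x ∂(μ + ν), ν.rnDeriv (μ + ν) x = 1 - μ.rnDeriv (μ + ν) x := by
  filter_upwards [Measure.rnDeriv_add μ ν (μ + ν), Measure.rnDeriv_self (μ + ν)] with x hadd hself
  have hsum : ν.rnDeriv (μ + ν) x + μ.rnDeriv (μ + ν) x = 1 := by
    rw [add_comm, ← Pi.add_apply, ← hadd, hself]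
  exact ENNReal.eq_sub_of_add_eq (ne_top_of_le_ne_top ENNReal.one_ne_top (hsum ▸ le_add_self)) hsum

end General

section MLRP

variable {α : Type*} [MeasurableSpace α] [LinearOrder α] {μ ν : Measure α}

theorem MLRP.aeOrderedPairs_rnDeriv_mul_le [SigmaFinite μ] [SigmaFinite ν] (h : MLRP μ ν) :
    AEOrderedPairs (μ + ν) fun x y =>
      μ.rnDeriv (μ + ν) x * ν.rnDeriv (μ + ν) y ≤ ν.rnDeriv (μ + ν) x * μ.rnDeriv (μ + ν) y :=
  AEOrderedPairs.mono_of_ae h ((Measure.rnDeriv_ne_top μ _).and (Measure.rnDeriv_ne_top ν _))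
    fun _ _ hx hy _ hxy => ENNReal.mul_le_mul_of_div_le_div hx.2 hy.1 hy.2 hxy

theorem mlrp_of_aeOrderedPairs_rnDeriv_le [IsFiniteMeasure μ] [IsFiniteMeasure ν]
    (h : AEOrderedPairs (μ + ν) fun x y => μ.rnDeriv (μ + ν) x ≤ μ.rnDeriv (μ + ν) y) :
    MLRP μ ν :=
  h.mono_of_ae (ae_rnDeriv_add_right_eq_one_sub μ ν) fun _ _ hx hy _ hxy => by
    rw [hx, hy]
    exact ENNReal.div_le_div hxy (tsub_le_tsub_left hxy 1)

theorem AEOrderedPairs.ae_restrict_prod_restrict {ρ : Measure α} [SFinite ρ] {p : α → α → Prop}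
    (h : AEOrderedPairs ρ p) {s u : Set α} (hs : MeasurableSet s) (hu : MeasurableSet u)
    (hsu : ∀ x ∈ s, ∀ y ∈ u, x ≤ y) :
    ∀ᵐ z ∂(ρ.restrict s).prod (ρ.restrict u), p z.1 z.2 := by
  obtain ⟨S, hS, hp⟩ := h
  have hS' := measure_eq_zero_iff_ae_notMem.1 hS
  have h₁ : ∀ᵐ x ∂ρ.restrict s, x ∉ S ∧ x ∈ s := (ae_restrict_of_ae hS').and (ae_restrict_mem hs)
  have h₂ : ∀ᵐ y ∂ρ.restrict u, y ∉ S ∧ y ∈ u := (ae_restrict_of_ae hS').and (ae_restrict_mem hu)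
  filter_upwards [Measure.quasiMeasurePreserving_fst.ae h₁,
    Measure.quasiMeasurePreserving_snd.ae h₂] with z hz₁ hz₂
  exact hp _ hz₁.1 _ hz₂.1 (hsu _ hz₁.2 _ hz₂.2)

end MLRP

/-- Klinostochastic dominance: for every admissible weight `h`, the tilt `h ⊙ μ` first-order
stochastically dominates `h ⊙ ν`, i.e. its distribution function is the smaller one. -/
def KlinostochasticDominates (μ ν : Measure ℝ) : Prop :=
  ∀ h : ℝ → ℝ, Measurable h → (∀ᵐ x ∂μ, 0 < h x) → (∀ᵐ x ∂ν, 0 < h x) →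
    Integrable h μ → Integrable h ν → 0 < ∫ x, h x ∂μ → 0 < ∫ x, h x ∂ν →
    ∀ t : ℝ, (∫ x, (Iic t).indicator h x ∂μ) / (∫ x, h x ∂μ) ≤
      (∫ x, (Iic t).indicator h x ∂ν) / (∫ x, h x ∂ν)

section Real

variable {μ ν : Measure ℝ}

theorem MLRP.setLIntegral_Iic_mul_lintegral_le [IsFiniteMeasure μ] [IsFiniteMeasure ν]
    (hμν : MLRP μ ν) {H : ℝ → ℝ≥0∞} (hH : Measurable H) (t : ℝ) :
    (∫⁻ x in Iic t, H x ∂μ) * ∫⁻ x, H x ∂ν ≤ (∫⁻ x in Iic t, H x ∂ν) * ∫⁻ x, H x ∂μ := by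
  have hsplit (κ : Measure ℝ) :
      ∫⁻ x, H x ∂κ = (∫⁻ x in Iic t, H x ∂κ) + ∫⁻ x in Ioi t, H x ∂κ := by
    rw [← compl_Iic, lintegral_add_compl _ measurableSet_Iic]
  have hdens {κ : Measure ℝ} [SigmaFinite κ] (hκ : κ ≪ μ + ν) {s : Set ℝ} (hs : MeasurableSet s) :
      ∫⁻ x in s, H x ∂κ = ∫⁻ x in s, κ.rnDeriv (μ + ν) x * H x ∂(μ + ν) :=
    (setLIntegral_rnDeriv_mul hκ hH.aemeasurable hs).symm
  have hμ : μ ≪ μ + ν := Measure.AbsolutelyContinuous.rfl.add_right ν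
  have hν : ν ≪ μ + ν := Measure.AbsolutelyContinuous.rfl.add_right' μ
  have hcross : (∫⁻ x in Iic t, H x ∂μ) * (∫⁻ x in Ioi t, H x ∂ν) ≤
      (∫⁻ x in Iic t, H x ∂ν) * ∫⁻ x in Ioi t, H x ∂μ := by
    rw [hdens hμ measurableSet_Iic, hdens hμ measurableSet_Ioi, hdens hν measurableSet_Iic,
      hdens hν measurableSet_Ioi]
    refine lintegral_mul_lintegral_le_of_ae_prod (by fun_prop) (by fun_prop) ?_
    filter_upwards [hμν.aeOrderedPairs_rnDeriv_mul_le.ae_restrict_prod_restrict measurableSet_Iic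
      measurableSet_Ioi fun x hx y hy => (mem_Iic.1 hx).trans (mem_Ioi.1 hy).le] with z hz
    calc μ.rnDeriv (μ + ν) z.1 * H z.1 * (ν.rnDeriv (μ + ν) z.2 * H z.2)
        = μ.rnDeriv (μ + ν) z.1 * ν.rnDeriv (μ + ν) z.2 * (H z.1 * H z.2) := by ring
      _ ≤ ν.rnDeriv (μ + ν) z.1 * μ.rnDeriv (μ + ν) z.2 * (H z.1 * H z.2) := by gcongr
      _ = ν.rnDeriv (μ + ν) z.1 * H z.1 * (μ.rnDeriv (μ + ν) z.2 * H z.2) := by ring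
  rw [hsplit ν, hsplit μ, mul_add, mul_add, mul_comm (∫⁻ x in Iic t, H x ∂ν)]
  gcongr

theorem MLRP.klinostochasticDominates [IsFiniteMeasure μ] [IsFiniteMeasure ν] (hμν : MLRP μ ν) :
    KlinostochasticDominates μ ν := by
  intro h hh hμ hν hμi hνi hμp hνp t
  have hreal {κ : Measure ℝ} (hκ : ∀ᵐ x ∂κ, 0 < h x) :
      ∫ x, (Iic t).indicator h x ∂κ = (∫⁻ x in Iic t, ENNReal.ofReal (h x) ∂κ).toReal ∧
        ∫ x, h x ∂κ = (∫⁻ x, ENNReal.ofReal (h x) ∂κ).toReal := by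
    have hκ' : 0 ≤ᵐ[κ] h := hκ.mono fun _ hx => hx.le
    rw [integral_indicator measurableSet_Iic]
    exact ⟨integral_eq_lintegral_of_nonneg_ae (ae_restrict_of_ae hκ') hh.aestronglyMeasurable,
      integral_eq_lintegral_of_nonneg_ae hκ' hh.aestronglyMeasurable⟩
  rw [div_le_div_iff₀ hμp hνp, (hreal hμ).1, (hreal hμ).2, (hreal hν).1, (hreal hν).2,
    ← ENNReal.toReal_mul, ← ENNReal.toReal_mul]
  refine ENNReal.toReal_mono (ENNReal.mul_ne_top ?_ hμi.lintegral_lt_top.ne)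
    (hμν.setLIntegral_Iic_mul_lintegral_le hh.ennreal_ofReal t)
  exact ne_top_of_le_ne_top hνi.lintegral_lt_top.ne (setLIntegral_le_lintegral _ _)

theorem integral_indicator_indicator_one_add_const [IsFiniteMeasure μ] {s E : Set ℝ}
    (hs : MeasurableSet s) (hE : MeasurableSet E) (ε : ℝ) :
    ∫ x, s.indicator (fun x => E.indicator 1 x + ε) x ∂μ = μ.real (s ∩ E) + ε * μ.real s := by
  rw [integral_indicator hs, integral_add (f := E.indicator 1) ((integrable_const 1).indicator hE)
      (integrable_const ε),
    integral_indicator_one hE, integral_const, measureReal_restrict_apply hE, inter_comm,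
    smul_eq_mul, mul_comm, measureReal_restrict_apply_univ]

theorem KlinostochasticDominates.measureReal_inter_Iic_mul_le [IsProbabilityMeasure μ]
    [IsProbabilityMeasure ν] (hK : KlinostochasticDominates μ ν) {E : Set ℝ}
    (hE : MeasurableSet E) (t : ℝ) :
    μ.real (Iic t ∩ E) * ν.real E ≤ ν.real (Iic t ∩ E) * μ.real E := by
  have htilt : ∀ ε ∈ Ioi (0 : ℝ),
      (μ.real (Iic t ∩ E) + ε * μ.real (Iic t)) * (ν.real E + ε) ≤
        (ν.real (Iic t ∩ E) + ε * ν.real (Iic t)) * (μ.real E + ε) := by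
    intro ε (hε : 0 < ε)
    have hpos (x : ℝ) : 0 < E.indicator 1 x + ε :=
      add_pos_of_nonneg_of_pos (indicator_nonneg (fun _ _ => zero_le_one) x) hε
    have hint (κ : Measure ℝ) [IsFiniteMeasure κ] : Integrable (fun x => E.indicator 1 x + ε) κ :=
      ((integrable_const 1).indicator hE).add (integrable_const ε)
    have htotal (κ : Measure ℝ) [IsProbabilityMeasure κ] :
        ∫ x, E.indicator 1 x + ε ∂κ = κ.real E + ε := by
      simpa using integral_indicator_indicator_one_add_const (μ := κ) MeasurableSet.univ hE ε
    have hksd := hK (fun x => E.indicator 1 x + ε)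
      ((measurable_const.indicator hE).add measurable_const) (ae_of_all _ hpos)
      (ae_of_all _ hpos) (hint μ) (hint ν) (by rw [htotal]; positivity)
      (by rw [htotal]; positivity) t
    rwa [integral_indicator_indicator_one_add_const measurableSet_Iic hE,
      integral_indicator_indicator_one_add_const measurableSet_Iic hE, htotal, htotal,
      div_le_div_iff₀ (by positivity) (by positivity)] at hksd
  simpa using ContinuousWithinAt.closure_le (x := 0) (by simp) (by fun_prop) (by fun_prop) htilt

theorem KlinostochasticDominates.measureReal_mul_le_of_subset_Iic_Ioi [IsProbabilityMeasure μ]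
    [IsProbabilityMeasure ν] (hK : KlinostochasticDominates μ ν) {A B : Set ℝ}
    (hA : MeasurableSet A) (hB : MeasurableSet B) {s : ℝ} (hAs : A ⊆ Iic s) (hBs : B ⊆ Ioi s) :
    μ.real A * ν.real B ≤ ν.real A * μ.real B := by
  have hdisj : Disjoint A B := (Iic_disjoint_Ioi le_rfl).mono hAs hBs
  have hinter : Iic s ∩ (A ∪ B) = A := by
    rw [inter_union_distrib_left, inter_eq_right.2 hAs,
      ((Iic_disjoint_Ioi le_rfl).mono_right hBs).inter_eq, union_empty]
  have hksd := hK.measureReal_inter_Iic_mul_le (hA.union hB) s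
  rw [hinter, measureReal_union hdisj hB, measureReal_union hdisj hB] at hksd
  linarith

theorem KlinostochasticDominates.measure_eq_zero_or [IsProbabilityMeasure μ]
    [IsProbabilityMeasure ν] (hK : KlinostochasticDominates μ ν) (s : ℝ) {c c' : ℝ}
    (hc : 0 ≤ c) (hcc' : c < c') :
    (μ + ν) (Iic s ∩ {x | ENNReal.ofReal c' < μ.rnDeriv (μ + ν) x}) = 0 ∨
      (μ + ν) (Ioi s ∩ {x | μ.rnDeriv (μ + ν) x < ENNReal.ofReal c}) = 0 := by
  set A := Iic s ∩ {x | ENNReal.ofReal c' < μ.rnDeriv (μ + ν) x}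
  set B := Ioi s ∩ {x | μ.rnDeriv (μ + ν) x < ENNReal.ofReal c}
  have hf := Measure.measurable_rnDeriv μ (μ + ν)
  have hA : MeasurableSet A := measurableSet_Iic.inter (measurableSet_lt measurable_const hf)
  have hB : MeasurableSet B := measurableSet_Ioi.inter (measurableSet_lt hf measurable_const)
  have hlowA : c' * (μ + ν).real A ≤ μ.real A := by
    have := ENNReal.toReal_mono (measure_ne_top μ A)
      (mul_measure_le_of_le_rnDeriv fun x (hx : x ∈ A) => hx.2.le)
    rwa [ENNReal.toReal_mul, ENNReal.toReal_ofReal (hc.trans hcc'.le)] at this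
  have hupB : μ.real B ≤ c * (μ + ν).real B := by
    have := ENNReal.toReal_mono (ENNReal.mul_ne_top ENNReal.ofReal_ne_top (measure_ne_top _ B))
      (measure_le_mul_of_rnDeriv_le (Measure.AbsolutelyContinuous.rfl.add_right ν)
        fun x (hx : x ∈ B) => hx.2.le)
    rwa [ENNReal.toReal_mul, ENNReal.toReal_ofReal hc] at this
  have hAB := hK.measureReal_mul_le_of_subset_Iic_Ioi hA hB inter_subset_left inter_subset_left
  rw [measureReal_add_apply] at hlowA hupB
  -- `c' ρA ρB ≤ μA ρB ≤ ρA μB ≤ c ρA ρB` for `ρ = μ + ν`, and `c < c'`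
  have hprod : (μ + ν).real A * (μ + ν).real B = 0 := by
    rw [measureReal_add_apply, measureReal_add_apply]
    nlinarith [measureReal_nonneg (μ := μ) (s := A), measureReal_nonneg (μ := ν) (s := A),
      measureReal_nonneg (μ := μ) (s := B), measureReal_nonneg (μ := ν) (s := B)]
  simpa [measureReal_eq_zero_iff] using hprod

theorem KlinostochasticDominates.aeOrderedPairs_rnDeriv_le [IsProbabilityMeasure μ]
    [IsProbabilityMeasure ν] (hK : KlinostochasticDominates μ ν) :
    AEOrderedPairs (μ + ν) fun x y => μ.rnDeriv (μ + ν) x ≤ μ.rnDeriv (μ + ν) y := by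
  obtain ⟨S, hS, hAB⟩ := exists_measure_eq_zero_forall_subset_or_subset
    (ι := {q : ℚ × ℚ × ℚ // 0 ≤ q.2.1 ∧ q.2.1 < q.2.2})
    (A := fun q => Iic (q.1.1 : ℝ) ∩ {x | ENNReal.ofReal q.1.2.2 < μ.rnDeriv (μ + ν) x})
    (B := fun q => Ioi (q.1.1 : ℝ) ∩ {x | μ.rnDeriv (μ + ν) x < ENNReal.ofReal q.1.2.1})
    fun q => hK.measure_eq_zero_or _ (by exact_mod_cast q.2.1) (by exact_mod_cast q.2.2)
  refine ⟨S, hS, fun x hx y hy hxy => ?_⟩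
  by_contra! hlt
  obtain ⟨s, hxs, hsy⟩ := exists_rat_btwn (hxy.lt_of_ne (by rintro rfl; exact hlt.false))
  obtain ⟨c, hc, hyc, hcx⟩ := ENNReal.lt_iff_exists_rat_btwn.1 hlt
  obtain ⟨c', -, hcc', hc'x⟩ := ENNReal.lt_iff_exists_rat_btwn.1 hcx
  have hcc'ℚ : c < c' := by exact_mod_cast (ENNReal.ofReal_lt_ofReal_iff'.1 hcc').1
  rcases hAB ⟨(s, c, c'), hc, hcc'ℚ⟩ with hA | hB
  · exact hx (hA ⟨hxs.le, hc'x⟩)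
  · exact hy (hB ⟨hsy, hyc⟩)

theorem mlrp_iff_klinostochasticDominates [IsProbabilityMeasure μ] [IsProbabilityMeasure ν] :
    MLRP μ ν ↔ KlinostochasticDominates μ ν :=
  ⟨MLRP.klinostochasticDominates,
    fun hK => mlrp_of_aeOrderedPairs_rnDeriv_le hK.aeOrderedPairs_rnDeriv_le⟩

end Real

theorem klinostochasticDominates_map_iff {Ω : Type*} [MeasurableSpace Ω] {P : Measure Ω}
    {X Y : Ω → ℝ} (hX : Measurable X) (hY : Measurable Y) :
    KlinostochasticDominates (P.map X) (P.map Y) ↔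
      ∀ h : ℝ → ℝ, Measurable h →
        (∀ᵐ ω ∂P, 0 < h (X ω)) → (∀ᵐ ω ∂P, 0 < h (Y ω)) →
        Integrable (fun ω => h (X ω)) P → Integrable (fun ω => h (Y ω)) P →
        0 < (∫ ω, h (X ω) ∂P) → 0 < (∫ ω, h (Y ω) ∂P) →
        ∀ t : ℝ,
          (∫ ω, (Iic t).indicator h (X ω) ∂P) / (∫ ω, h (X ω) ∂P) ≤
            (∫ ω, (Iic t).indicator h (Y ω) ∂P) / (∫ ω, h (Y ω) ∂P) := by
  refine forall_congr' fun h => forall_congr' fun hh => ?_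
  have hint {Z : Ω → ℝ} (hZ : Measurable Z) {g : ℝ → ℝ} (hg : Measurable g) :
      ∫ x, g x ∂P.map Z = ∫ ω, g (Z ω) ∂P :=
    integral_map hZ.aemeasurable hg.aestronglyMeasurable
  have hpos : MeasurableSet {x | 0 < h x} := measurableSet_lt measurable_const hh
  simp only [ae_map_iff hX.aemeasurable hpos, ae_map_iff hY.aemeasurable hpos,
    integrable_map_measure hh.aestronglyMeasurable hX.aemeasurable,
    integrable_map_measure hh.aestronglyMeasurable hY.aemeasurable, hint hX hh, hint hY hh,
    hint hX (hh.indicator measurableSet_Iic), hint hY (hh.indicator measurableSet_Iic)]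
  rfl

/-- **Lemma A.3, MLRP ⟺ KSD (klinostochastic dominance).**  For real-valued random
variables `X` and `Y`, `law(X) ≽_lr law(Y)` holds if and only if for every measurable
weight function `h` with `h(X) > 0` a.s., `h(Y) > 0` a.s., `0 < E[h(X)] < ∞`, and
`0 < E[h(Y)] < ∞`, the tilted distribution `h ⊙ X` first-order stochastically dominates
`h ⊙ Y`:
`E[1(X ≤ t)·h(X)] / E[h(X)] ≤ E[1(Y ≤ t)·h(Y)] / E[h(Y)]` for all `t : ℝ`. -/
theorem mlrp_iff_klinostochasticDominance
    {Ω : Type*} [MeasurableSpace Ω] (P : Measure Ω) [IsProbabilityMeasure P]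
    (X Y : Ω → ℝ) (hX : Measurable X) (hY : Measurable Y) :
    MLRP (P.map X) (P.map Y) ↔
      ∀ h : ℝ → ℝ, Measurable h →
        (∀ᵐ ω ∂P, 0 < h (X ω)) → (∀ᵐ ω ∂P, 0 < h (Y ω)) →
        Integrable (fun ω => h (X ω)) P → Integrable (fun ω => h (Y ω)) P →
        0 < (∫ ω, h (X ω) ∂P) → 0 < (∫ ω, h (Y ω) ∂P) →
        ∀ t : ℝ,
          (∫ ω, (Iic t).indicator h (X ω) ∂P) / (∫ ω, h (X ω) ∂P) ≤
            (∫ ω, (Iic t).indicator h (Y ω) ∂P) / (∫ ω, h (Y ω) ∂P) := by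
  have := Measure.isProbabilityMeasure_map (μ := P) hX.aemeasurable
  have := Measure.isProbabilityMeasure_map (μ := P) hY.aemeasurable
  rw [mlrp_iff_klinostochasticDominates, klinostochasticDominates_map_iff hX hY]
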